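/- arXiv:2209.03386 — 4 statements merged into one kernel-verified Lean document; each statement's English description precedes it below -/
import Mathlib

section
/- Let n = 2k+1 ≥ 3 be odd, and let π = π₂ ∘ π₁, where π₁ = (1 2)(3 4)⋯(2k−1 2k) and π₂ = (2 3)(4 5)⋯(2k 2k+1) are permutations of {1,…,n}. Then π is a cyclic permutation with no fixed points; equivalently, for every pair of positions i, j ∈ {1,…,n} there exists an exponent 0 ≤ m < n such that π^m(i) = j. Consequently, after applying π a total of n times to the sequence (1,…,n), each number appears at each position at least once. -/
/-- For odd `n = 2k+1 ≥ 3`, with (0-indexed) `π₁ = (0 1)(2 3)⋯(2k-2 2k-1)` and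
`π₂ = (1 2)(3 4)⋯(2k-1 2k)` (these are the 1-indexed `(1 2)(3 4)⋯(2k-1 2k)` and
`(2 3)(4 5)⋯(2k 2k+1)` of the paper), the composition `π = π₂ ∘ π₁` is a cyclic
permutation with no fixed points: for every pair of positions `i, j` there is an
exponent `m < n` with `π^m i = j`. -/
theorem stmt_3 (k : ℕ) (hk : 1 ≤ k)
    (π₁ π₂ : Equiv.Perm (Fin (2 * k + 1)))
    (h1 : ∀ i : Fin (2 * k + 1), ((π₁ i : ℕ)) =
      if i.val < 2 * k then (if i.val % 2 = 0 then i.val + 1 else i.val - 1) else i.val)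
    (h2 : ∀ i : Fin (2 * k + 1), ((π₂ i : ℕ)) =
      if i.val = 0 then 0 else (if i.val % 2 = 1 then i.val + 1 else i.val - 1)) :
    (π₂ * π₁).IsCycle ∧ (∀ i, (π₂ * π₁) i ≠ i) ∧
      ∀ i j : Fin (2 * k + 1), ∃ m, m < 2 * k + 1 ∧ ((π₂ * π₁) ^ m) i = j := by
  set π := π₂ * π₁ with hπ
  have step : ∀ i : Fin (2 * k + 1), ((π i : ℕ)) =
      if i.val % 2 = 0 then (if i.val < 2 * k then i.val + 2 else 2 * k - 1)
      else i.val - 2 := by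
    intro i
    have hi := i.isLt
    have e1 := h1 i
    have e2 := h2 (π₁ i)
    have hi2 := (π₁ i).isLt
    rw [hπ, Equiv.Perm.mul_apply]
    split_ifs at e1 e2 ⊢ <;> omega
  have pow0 : ∀ t, t ≤ 2 * k → (((π ^ t) 0 : Fin (2 * k + 1)) : ℕ) =
      if t ≤ k then 2 * t else 4 * k + 1 - 2 * t := by
    intro t ht
    induction t with
    | zero => simp
    | succ t ih =>
      have ih' := ih (by omega)
      rw [pow_succ', Equiv.Perm.mul_apply, step, ih']
      split_ifs <;> omega
  have pown : ((π ^ (2 * k + 1)) 0 : Fin (2 * k + 1)) = 0 := by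
    have h := pow0 (2 * k) le_rfl
    have hv : (((π ^ (2 * k + 1)) 0 : Fin (2 * k + 1)) : ℕ) = 0 := by
      rw [pow_succ', Equiv.Perm.mul_apply, step, h]
      split_ifs <;> omega
    exact Fin.ext (by rw [hv, Fin.val_zero])
  have powmul : ∀ c, ((π ^ (c * (2 * k + 1))) 0 : Fin (2 * k + 1)) = 0 := by
    intro c
    induction c with
    | zero => simp
    | succ c ih =>
      have he : (c + 1) * (2 * k + 1) = c * (2 * k + 1) + (2 * k + 1) := by ring
      rw [he, pow_add, Equiv.Perm.mul_apply, pown, ih]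
  have surj : ∀ j : Fin (2 * k + 1), ∃ t, t ≤ 2 * k ∧ (π ^ t) 0 = j := by
    intro j
    have hj := j.isLt
    by_cases hp : j.val % 2 = 0
    · refine ⟨j.val / 2, by omega, Fin.ext ?_⟩
      rw [pow0 _ (by omega)]
      split_ifs <;> omega
    · refine ⟨(4 * k + 1 - j.val) / 2, by omega, Fin.ext ?_⟩
      rw [pow0 _ (by omega)]
      split_ifs <;> omega
  have nofix : ∀ i : Fin (2 * k + 1), π i ≠ i := by
    intro i hfix
    have hs := step i
    rw [hfix] at hs
    have hi := i.isLt
    split_ifs at hs <;> omega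
  refine ⟨⟨0, nofix 0, ?_⟩, nofix, ?_⟩
  · intro y hy
    obtain ⟨t, _, ht⟩ := surj y
    exact ⟨(t : ℤ), by rw [zpow_natCast]; exact ht⟩
  · intro i j
    obtain ⟨s, hs, hsi⟩ := surj i
    obtain ⟨t, ht, htj⟩ := surj j
    by_cases hst : s ≤ t
    · refine ⟨t - s, by omega, ?_⟩
      rw [← hsi, ← Equiv.Perm.mul_apply, ← pow_add]
      have he : t - s + s = t := by omega
      rw [he, htj]
    · refine ⟨t + (2 * k + 1) - s, by omega, ?_⟩
      rw [← hsi, ← Equiv.Perm.mul_apply, ← pow_add]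
      have he : t + (2 * k + 1) - s + s = t + 1 * (2 * k + 1) := by omega
      rw [he, pow_add, Equiv.Perm.mul_apply, powmul 1, htj]
end

section
/- Let n = 2k ≥ 2 be even, and let π = π₂ ∘ π₁, where π₁ = (1 2)(3 4)⋯(2k−1 2k) and π₂ = (2 3)(4 5)⋯(2k−2 2k−1) are permutations of {1,…,n}. Then π is a cyclic permutation with no fixed points; equivalently, for every pair of positions i, j ∈ {1,…,n} there exists an exponent 0 ≤ m < n such that π^m(i) = j. Consequently, after applying π a total of n times to the sequence (1,…,n), each number appears at each position at least once. -/
/-!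
One round `π = π₂ ∘ π₁` moves every even position two steps up and every odd position two
steps down, except that the top even position `2k - 2` turns to `2k - 1` and position `1`
turns to `0`. Starting from `0`, the orbit therefore runs up through the even positions
`0, 2, …, 2k - 2` and back down through the odd ones `2k - 1, 2k - 3, …, 1`, visiting all
`2k` positions: `π` is a single fixed-point-free `2k`-cycle, whose order is `2k`.
-/

open Equiv Perm

theorem Equiv.Perm.IsCycle.exists_pow_lt_card_eq {α : Type*} [Fintype α] [DecidableEq α]
    {σ : Perm α} (hσ : σ.IsCycle) (hfix : ∀ x, σ x ≠ x) (x y : α) :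
    ∃ m < Fintype.card α, (σ ^ m) x = y := by
  have hsupp : σ.support = Finset.univ :=
    Finset.eq_univ_of_forall fun z => mem_support.mpr (hfix z)
  rw [← Finset.card_univ, ← hsupp, ← hσ.orderOf]
  exact (hσ.sameCycle (hfix x) (hfix y)).exists_pow_eq'

namespace SwapNetwork

def roundStep (k x : ℕ) : ℕ :=
  if x % 2 = 0 then (if x = 2 * k - 2 then 2 * k - 1 else x + 2)
  else (if x = 1 then 0 else x - 2)

/-- The position reached from `0` after `m < 2 * k` rounds. -/
def orbitOfZero (k m : ℕ) : ℕ :=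
  if m < k then 2 * m else 4 * k - 1 - 2 * m

theorem roundStep_ne_self {k x : ℕ} (hx : x < 2 * k) : roundStep k x ≠ x := by
  unfold roundStep
  split_ifs <;> omega

theorem roundStep_orbitOfZero {k m : ℕ} (hm : m + 1 < 2 * k) :
    roundStep k (orbitOfZero k m) = orbitOfZero k (m + 1) := by
  unfold roundStep orbitOfZero
  split_ifs <;> omega

theorem exists_orbitOfZero_eq {k x : ℕ} (hx : x < 2 * k) :
    ∃ m < 2 * k, orbitOfZero k m = x := by
  unfold orbitOfZero
  rcases Nat.even_or_odd x with ⟨r, rfl⟩ | ⟨r, rfl⟩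
  · exact ⟨r, by omega, by split_ifs <;> omega⟩
  · exact ⟨2 * k - 1 - r, by omega, by split_ifs <;> omega⟩

theorem mul_apply_val_eq_roundStep {k : ℕ} {π₁ π₂ : Perm (Fin (2 * k))}
    (h1 : ∀ i : Fin (2 * k), (π₁ i : ℕ) = if i.val % 2 = 0 then i.val + 1 else i.val - 1)
    (h2 : ∀ i : Fin (2 * k), (π₂ i : ℕ) =
      if i.val = 0 ∨ i.val = 2 * k - 1 then i.val
      else (if i.val % 2 = 1 then i.val + 1 else i.val - 1))
    (x : Fin (2 * k)) : ((π₂ * π₁) x : ℕ) = roundStep k x := by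
  have hx := x.isLt
  have hπ₁x := h1 x
  have hπ₁x_lt := (π₁ x).isLt
  rw [mul_apply, h2, roundStep]
  split_ifs at hπ₁x ⊢ <;> omega

section Orbit

variable {k : ℕ} {σ : Perm (Fin (2 * k))} (hσ : ∀ x, (σ x : ℕ) = roundStep k x)
include hσ

theorem pow_apply_zero_val (hk : 1 ≤ k) {m : ℕ} (hm : m < 2 * k) :
    ((σ ^ m) ⟨0, by omega⟩ : ℕ) = orbitOfZero k m := by
  induction m with
  | zero => simp [orbitOfZero, Nat.pos_of_ne_zero (by omega : k ≠ 0)]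
  | succ m ih => rw [pow_succ', mul_apply, hσ, ih (by omega), roundStep_orbitOfZero hm]

theorem sameCycle_zero (hk : 1 ≤ k) (y : Fin (2 * k)) : σ.SameCycle ⟨0, by omega⟩ y := by
  obtain ⟨m, hm, hmy⟩ := exists_orbitOfZero_eq y.isLt
  exact ⟨m, by rw [zpow_natCast]; exact Fin.ext (by rw [pow_apply_zero_val hσ hk hm, hmy])⟩

theorem apply_ne_self (x : Fin (2 * k)) : σ x ≠ x := fun h =>
  roundStep_ne_self x.isLt (by rw [← hσ, h])

theorem isCycle (hk : 1 ≤ k) : σ.IsCycle :=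
  ⟨⟨0, by omega⟩, apply_ne_self hσ _, fun y _ => sameCycle_zero hσ hk y⟩

end Orbit

end SwapNetwork

open SwapNetwork in
/-- For even `n = 2k ≥ 2`, with (0-indexed) `π₁ = (0 1)(2 3)⋯(2k-2 2k-1)` and
`π₂ = (1 2)(3 4)⋯(2k-3 2k-2)` fixing `0` and `2k-1` (these are the 1-indexed
`(1 2)(3 4)⋯(2k-1 2k)` and `(2 3)(4 5)⋯(2k-2 2k-1)` of the paper), the composition
`π = π₂ ∘ π₁` is a cyclic permutation with no fixed points: for every pair of
positions `i, j` there is an exponent `m < n` with `π^m i = j`. -/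
theorem stmt_4 (k : ℕ) (hk : 1 ≤ k)
    (π₁ π₂ : Equiv.Perm (Fin (2 * k)))
    (h1 : ∀ i : Fin (2 * k), ((π₁ i : ℕ)) =
      if i.val % 2 = 0 then i.val + 1 else i.val - 1)
    (h2 : ∀ i : Fin (2 * k), ((π₂ i : ℕ)) =
      if i.val = 0 ∨ i.val = 2 * k - 1 then i.val
      else (if i.val % 2 = 1 then i.val + 1 else i.val - 1)) :
    (π₂ * π₁).IsCycle ∧ (∀ i, (π₂ * π₁) i ≠ i) ∧
      ∀ i j : Fin (2 * k), ∃ m, m < 2 * k ∧ ((π₂ * π₁) ^ m) i = j := by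
  have hσ := mul_apply_val_eq_roundStep h1 h2
  have hfix := apply_ne_self hσ
  have hcycle := isCycle hσ hk
  refine ⟨hcycle, hfix, fun i j => ?_⟩
  simpa using hcycle.exists_pow_lt_card_eq hfix i j
end

section
/- Let n, m be positive integers and let σ_{n,m} be the block-swap permutation of {0,…,n+m−1}, defined by σ(i) = i + m for 0 ≤ i < n and σ(n+j) = j for 0 ≤ j < m. Then there exist permutations λ₁, …, λ_{n+m−1} of {0,…,n+m−1}, each of which is an involution moving every point by at most 1 (i.e., λ∘λ = id and |λ(i) − i| ≤ 1 for all i, so each λ_t is a product of pairwise disjoint adjacent transpositions), such that σ_{n,m} = λ_{n+m−1} ∘ ⋯ ∘ λ₂ ∘ λ₁. -/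
/-!
Schedule the crossings: the token starting at `i < n` and the token starting at `n + j`
(`j < m`) exchange places in layer `n - i + j`, across the edge `(i + j, i + j + 1)`.
Thus token `i < n` waits for `n - 1 - i` layers and then moves one step right in each of
the next `m` layers, while token `n + j` waits `j` layers and then moves one step left in each
of the next `n` layers; after `n + m - 1` layers every token has reached its target. The
edges used in one layer all have left endpoint of parity `n + t`, so they are disjoint and
each layer is an involution moving every point by at most one.
-/

open Equiv Function

namespace BlockSwap

/-- Edge `(p, p + 1)` is swapped in layer `t`; this is the arithmetic form of
`∃ i < n, ∃ j < m, p = i + j ∧ t = n - i + j`. -/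
def Active (n m t p : ℕ) : Prop :=
  (p + n + t) % 2 = 0 ∧ n ≤ p + t ∧ t ≤ p + n ∧ p + 2 ≤ n + t ∧ p + t + 2 ≤ n + 2 * m

instance (n m t p : ℕ) : Decidable (Active n m t p) := by
  unfold Active; infer_instance

def layerFun (n m t q : ℕ) : ℕ :=
  if Active n m t q then q + 1 else if 1 ≤ q ∧ Active n m t (q - 1) then q - 1 else q

/-- Position after `t` layers of the token that starts at `i`. -/
def trajectory (n m t i : ℕ) : ℕ :=
  if i < n then i + min (t - (n - 1 - i)) m else i - min (t - (i - n)) n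

section Layer

variable (n m t : ℕ)

theorem layerFun_lt {q : ℕ} (hq : q < n + m) : layerFun n m t q < n + m := by
  unfold layerFun; split_ifs <;> (unfold Active at *; omega)

theorem layerFun_involutive : Involutive (layerFun n m t) := by
  intro q; unfold layerFun; split_ifs <;> (unfold Active at *; omega)

theorem abs_layerFun_sub_le (q : ℕ) : |(layerFun n m t q : ℤ) - q| ≤ 1 := by
  rw [abs_le]; unfold layerFun; split_ifs <;> (unfold Active at *; omega)

def layer : Perm (Fin (n + m)) :=
  Involutive.toPerm (fun q => ⟨layerFun n m t q, layerFun_lt n m t q.2⟩)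
    fun q => Fin.ext (layerFun_involutive n m t q)

theorem layer_mul_self : layer n m t * layer n m t = 1 := by
  ext q; exact layerFun_involutive n m t q

end Layer

section Trajectory

variable {n m : ℕ}

theorem trajectory_lt (t : ℕ) {i : ℕ} (hi : i < n + m) : trajectory n m t i < n + m := by
  unfold trajectory; split_ifs <;> omega

theorem trajectory_zero (i : ℕ) : trajectory n m 0 i = i := by
  unfold trajectory; split_ifs <;> omega

theorem trajectory_succ (t : ℕ) {i : ℕ} (hi : i < n + m) :
    trajectory n m (t + 1) i = layerFun n m (t + 1) (trajectory n m t i) := by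
  unfold trajectory layerFun Active; split_ifs <;> omega

theorem trajectory_final {i : ℕ} (hi : i < n + m) :
    trajectory n m (n + m - 1) i = if i < n then i + m else i - n := by
  unfold trajectory; split_ifs <;> omega

end Trajectory

end BlockSwap

theorem List.prod_map_reverse_range_apply {α : Type*} (τ : ℕ → Equiv.Perm α) (pos : ℕ → α → α)
    (h0 : ∀ a, pos 0 a = a) (hsucc : ∀ t a, pos (t + 1) a = τ (t + 1) (pos t a)) (t : ℕ)
    (a : α) : ((List.range t).reverse.map fun s => τ (s + 1)).prod a = pos t a := by
  induction t with
  | zero => simp [h0]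
  | succ t ih =>
    simp only [List.range_succ, List.reverse_append, List.reverse_singleton,
      List.singleton_append, List.map_cons, List.prod_cons, Perm.mul_apply, ih, hsucc]

open BlockSwap in
theorem stmt_7_general (n m : ℕ)
    (σ : Equiv.Perm (Fin (n + m)))
    (hσ : ∀ i : Fin (n + m), ((σ i : ℕ)) =
      if (i : ℕ) < n then (i : ℕ) + m else (i : ℕ) - n) :
    ∃ L : List (Equiv.Perm (Fin (n + m))),
      L.length = n + m - 1 ∧
      (∀ τ ∈ L, τ * τ = 1 ∧ ∀ i : Fin (n + m), |((τ i : ℕ) : ℤ) - ((i : ℕ) : ℤ)| ≤ 1) ∧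
      L.prod = σ := by
  refine ⟨(List.range (n + m - 1)).reverse.map fun s => layer n m (s + 1), by simp, ?_, ?_⟩
  · intro τ hτ
    obtain ⟨s, -, rfl⟩ := List.mem_map.1 hτ
    exact ⟨layer_mul_self n m (s + 1), fun i => abs_layerFun_sub_le n m (s + 1) i⟩
  · ext i
    have hprod := List.prod_map_reverse_range_apply (layer n m)
      (fun t i => ⟨trajectory n m t i, trajectory_lt t i.2⟩)
      (fun i => Fin.ext (trajectory_zero i)) (fun t i => Fin.ext (trajectory_succ t i.2))
      (n + m - 1) i
    rw [hprod, hσ i, ← trajectory_final i.2]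

/-- The block-swap permutation `σ_{n,m}` of `{0,…,n+m-1}` (mapping `i ↦ i + m` for
`i < n` and `n + j ↦ j` for `j < m`) is the composition of `n + m - 1` parallel swap
layers: involutions moving every point by at most 1. -/
theorem stmt_7 (n m : ℕ) (hn : 1 ≤ n) (hm : 1 ≤ m)
    (σ : Equiv.Perm (Fin (n + m)))
    (hσ : ∀ i : Fin (n + m), ((σ i : ℕ)) =
      if (i : ℕ) < n then (i : ℕ) + m else (i : ℕ) - n) :
    ∃ L : List (Equiv.Perm (Fin (n + m))),
      L.length = n + m - 1 ∧
      (∀ τ ∈ L, τ * τ = 1 ∧ ∀ i : Fin (n + m), |((τ i : ℕ) : ℤ) - ((i : ℕ) : ℤ)| ≤ 1) ∧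
      L.prod = σ :=
  stmt_7_general n m σ hσ
end

section
/- Let n, k, m be positive integers and let τ be the interlacing permutation of {0,…,n(k+m)−1} defined by τ(a·k + c) = a·(k+m) + c for 0 ≤ a < n, 0 ≤ c < k, and τ(n·k + a·m + c) = a·(k+m) + k + c for 0 ≤ a < n, 0 ≤ c < m. Then τ can be written as a product of exactly k·m·n(n−1)/2 adjacent transpositions. -/
/-!
Bubble sort: swapping an adjacent descent of a permutation removes exactly one inversion, so every
permutation is a product of exactly as many adjacent transpositions as it has inversions. The
interlacing permutation keeps the order within the `A` qubits and within the `B` qubits, so its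
inversions are exactly the pairs (qubit of `A_a`, qubit of `B_b`) with `b < a`; there are
`k * m * (n choose 2)` of them.
-/

open Finset Equiv

namespace Equiv.Perm

variable {N : ℕ}

def inversions (σ : Perm (Fin N)) : Finset (Fin N × Fin N) :=
  {p | p.1 < p.2 ∧ σ p.2 < σ p.1}

@[simp]
lemma mem_inversions {σ : Perm (Fin N)} {p : Fin N × Fin N} :
    p ∈ σ.inversions ↔ p.1 < p.2 ∧ σ p.2 < σ p.1 := by
  simp [inversions]

@[simp]
lemma inversions_one : (1 : Perm (Fin N)).inversions = ∅ := by
  ext p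
  simpa using le_of_lt

lemma eq_one_of_strictMono {σ : Perm (Fin N)} (h : StrictMono σ) : σ = 1 :=
  ext fun x => congrArg (· x)
    (Subsingleton.elim (h.orderIsoOfSurjective σ σ.surjective) (OrderIso.refl _))

lemma exists_adjacent_descent {σ : Perm (Fin N)} (h : σ ≠ 1) :
    ∃ i j : Fin N, (j : ℕ) = i + 1 ∧ σ j < σ i := by
  by_contra! hasc
  obtain _ | N := N
  · exact h (Subsingleton.elim _ _)
  refine h (eq_one_of_strictMono (Fin.strictMono_iff_lt_succ.2 fun i => ?_))
  exact (hasc _ _ (by simp)).lt_of_ne (σ.injective.ne (Fin.castSucc_lt_succ (i := i)).ne)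

lemma swap_apply_lt_swap_apply_iff {i j u v : Fin N} (hij : (j : ℕ) = i + 1)
    (hij' : ¬(u = i ∧ v = j)) (hji : ¬(u = j ∧ v = i)) :
    swap i j u < swap i j v ↔ u < v := by
  simp only [swap_apply_def]
  split_ifs <;> simp only [Fin.lt_def, Fin.ext_iff, not_and] at * <;> omega

lemma card_inversions_mul_swap {σ : Perm (Fin N)} {i j : Fin N} (hij : (j : ℕ) = i + 1)
    (hσ : σ j < σ i) : #(σ * swap i j).inversions + 1 = #σ.inversions := by
  have hmap : (σ * swap i j).inversions.map (prodCongr (swap i j) (swap i j)).toEmbedding =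
      σ.inversions.erase (i, j) := by
    ext ⟨u, v⟩
    simp only [mem_map_equiv, prodCongr_symm, symm_swap, prodCongr_apply, Prod.map,
      mem_inversions, mul_apply, swap_apply_self, mem_erase, ne_eq, Prod.mk.injEq]
    by_cases h1 : u = i ∧ v = j
    · obtain ⟨rfl, rfl⟩ := h1
      simp [Fin.lt_def, -Fin.val_fin_lt, hij]
    by_cases h2 : u = j ∧ v = i
    · obtain ⟨rfl, rfl⟩ := h2
      simp [hσ.not_gt]
    rw [swap_apply_lt_swap_apply_iff hij h1 h2]
    tauto
  have hmem : (i, j) ∈ σ.inversions := by simp [Fin.lt_def, hij, hσ]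
  rw [← card_erase_add_one hmem, ← hmap, card_map]

theorem exists_list_adjacent_swaps_prod_eq (σ : Perm (Fin N)) :
    ∃ L : List (Perm (Fin N)), L.length = #σ.inversions ∧
      (∀ ρ ∈ L, ∃ i j : Fin N, (j : ℕ) = i + 1 ∧ ρ = swap i j) ∧ L.prod = σ := by
  obtain ⟨M, hM⟩ : ∃ M, #σ.inversions = M := ⟨_, rfl⟩
  induction M generalizing σ with
  | zero =>
    obtain rfl : σ = 1 := by
      by_contra h
      obtain ⟨i, j, hij, hσ⟩ := exists_adjacent_descent h
      have : (i, j) ∈ σ.inversions := by simp [Fin.lt_def, hij, hσ]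
      simp_all
    exact ⟨[], by simp, by simp, rfl⟩
  | succ M ih =>
    have hσ : σ ≠ 1 := by rintro rfl; simp at hM
    obtain ⟨i, j, hij, hdesc⟩ := exists_adjacent_descent hσ
    have hcard := card_inversions_mul_swap hij hdesc
    obtain ⟨L, hlen, hswaps, hprod⟩ := ih (σ * swap i j) (by omega)
    refine ⟨L ++ [swap i j], by simp only [List.length_append, hlen]; omega, ?_,
      by simp [hprod, mul_assoc]⟩
    simpa [or_imp, forall_and] using ⟨hswaps, i, j, hij, rfl⟩

end Equiv.Perm

theorem Nat.mul_add_lt_mul_add_iff {K a a' c c' : ℕ} (hc : c < K) (hc' : c' < K) :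
    a * K + c < a' * K + c' ↔ a < a' ∨ a = a' ∧ c < c' := by
  constructor
  · intro h
    rcases lt_trichotomy a a' with ha | rfl | ha
    · exact .inl ha
    · exact .inr ⟨rfl, by omega⟩
    · nlinarith
  · rintro (ha | ⟨rfl, hc⟩)
    · nlinarith
    · omega

section Interlace

variable {n k m : ℕ}

variable (n k m) in
def interlaceSource : Fin n × Fin k ⊕ Fin n × Fin m ≃ Fin (n * (k + m)) :=
  (sumCongr finProdFinEquiv finProdFinEquiv).trans
    (finSumFinEquiv.trans (finCongr (mul_add n k m).symm))

@[simp]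
lemma val_interlaceSource_inl (a : Fin n) (c : Fin k) :
    (interlaceSource n k m (.inl (a, c)) : ℕ) = a * k + c := by
  simp [interlaceSource, mul_comm]; ring

@[simp]
lemma val_interlaceSource_inr (b : Fin n) (d : Fin m) :
    (interlaceSource n k m (.inr (b, d)) : ℕ) = n * k + (b * m + d) := by
  simp [interlaceSource, mul_comm]; ring

def IsInterlacing (τ : Perm (Fin (n * (k + m)))) : Prop :=
  (∀ a c, (τ (interlaceSource n k m (.inl (a, c))) : ℕ) = a * (k + m) + c) ∧
    ∀ b d, (τ (interlaceSource n k m (.inr (b, d))) : ℕ) = b * (k + m) + (k + d)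

variable (n k m) in
/-- `((b, a), (c, d))` is sent to the positions of the `c`-th qubit of `A_a` and the `d`-th qubit
of `B_b`. -/
def crossingPair (x : (Fin n × Fin n) × (Fin k × Fin m)) :
    Fin (n * (k + m)) × Fin (n * (k + m)) :=
  (interlaceSource n k m (.inl (x.1.2, x.2.1)), interlaceSource n k m (.inr (x.1.1, x.2.2)))

lemma crossingPair_injective : (crossingPair n k m).Injective := by
  rintro ⟨⟨b, a⟩, c, d⟩ ⟨⟨b', a'⟩, c', d'⟩ h
  simp_all [crossingPair]

lemma IsInterlacing.inversions_eq {τ : Perm (Fin (n * (k + m)))} (hτ : IsInterlacing τ) :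
    τ.inversions =
      (({x | x.1 < x.2} : Finset (Fin n × Fin n)) ×ˢ univ).image (crossingPair n k m) := by
  ext ⟨p, q⟩
  obtain ⟨x, rfl⟩ := (interlaceSource n k m).surjective p
  obtain ⟨y, rfl⟩ := (interlaceSource n k m).surjective q
  have hc : ∀ c : Fin k, (c : ℕ) < k + m := fun c => by omega
  have hd : ∀ d : Fin m, k + (d : ℕ) < k + m := fun d => by omega
  rcases x with ⟨a, c⟩ | ⟨a, c⟩ <;> rcases y with ⟨b, d⟩ | ⟨b, d⟩ <;>
    simp only [Perm.mem_inversions, Fin.lt_def, val_interlaceSource_inl, val_interlaceSource_inr,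
      hτ.1, hτ.2]
  · rw [Nat.mul_add_lt_mul_add_iff c.2 d.2, Nat.mul_add_lt_mul_add_iff (hc d) (hc c)]
    simp [crossingPair]
    omega
  · have hAB : (a : ℕ) * k + c < n * k + (b * m + d) := by nlinarith [a.2, c.2]
    rw [Nat.mul_add_lt_mul_add_iff (hd d) (hc c)]
    simp [crossingPair, hAB]
    omega
  · have hAB : (b : ℕ) * k + d < n * k + (a * m + c) := by nlinarith [b.2, d.2]
    simp [crossingPair]
    omega
  · rw [add_lt_add_iff_left, Nat.mul_add_lt_mul_add_iff c.2 d.2,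
      Nat.mul_add_lt_mul_add_iff (hd d) (hd c)]
    simp [crossingPair]
    omega

lemma IsInterlacing.card_inversions {τ : Perm (Fin (n * (k + m)))} (hτ : IsInterlacing τ) :
    #τ.inversions = n.choose 2 * (k * m) := by
  rw [hτ.inversions_eq, card_image_of_injective _ crossingPair_injective, card_product,
    Fintype.card_product_filter_lt]
  simp

end Interlace

theorem stmt_8_general (n k m : ℕ)
    (τ : Equiv.Perm (Fin (n * (k + m))))
    (hτA : ∀ a c : ℕ, a < n → c < k → ∀ h : a * k + c < n * (k + m),
      ((τ ⟨a * k + c, h⟩ : ℕ)) = a * (k + m) + c)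
    (hτB : ∀ a c : ℕ, a < n → c < m → ∀ h : n * k + a * m + c < n * (k + m),
      ((τ ⟨n * k + a * m + c, h⟩ : ℕ)) = a * (k + m) + k + c) :
    ∃ L : List (Equiv.Perm (Fin (n * (k + m)))),
      L.length = k * m * (n * (n - 1) / 2) ∧
      (∀ ρ ∈ L, ∃ i j : Fin (n * (k + m)), (j : ℕ) = (i : ℕ) + 1 ∧ ρ = Equiv.swap i j) ∧
      L.prod = τ := by
  have hτ : IsInterlacing τ := by
    refine ⟨fun a c => ?_, fun b d => ?_⟩
    · have h := (interlaceSource n k m (.inl (a, c))).isLt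
      rw [val_interlaceSource_inl] at h
      rw [← hτA a c a.2 c.2 h]
      congr 2
      exact Fin.ext (val_interlaceSource_inl a c)
    · have h := (interlaceSource n k m (.inr (b, d))).isLt
      rw [val_interlaceSource_inr, ← add_assoc] at h
      rw [← add_assoc, ← hτB b d b.2 d.2 h]
      congr 2
      exact Fin.ext (by simp [add_assoc])
  obtain ⟨L, hlen, hswaps, hprod⟩ := τ.exists_list_adjacent_swaps_prod_eq
  refine ⟨L, ?_, hswaps, hprod⟩
  rw [hlen, hτ.card_inversions, Nat.choose_two_right, mul_comm]

/-- The interlacing permutation of `{0,…,n(k+m)-1}` (sending position `a*k + c` to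
`a*(k+m) + c` for `a < n`, `c < k`, and position `n*k + a*m + c` to `a*(k+m) + k + c`
for `a < n`, `c < m`) can be written as a product of exactly `k*m*n(n-1)/2` adjacent
transpositions. -/
theorem stmt_8 (n k m : ℕ) (hn : 1 ≤ n) (hk : 1 ≤ k) (hm : 1 ≤ m)
    (τ : Equiv.Perm (Fin (n * (k + m))))
    (hτA : ∀ a c : ℕ, a < n → c < k → ∀ h : a * k + c < n * (k + m),
      ((τ ⟨a * k + c, h⟩ : ℕ)) = a * (k + m) + c)
    (hτB : ∀ a c : ℕ, a < n → c < m → ∀ h : n * k + a * m + c < n * (k + m),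
      ((τ ⟨n * k + a * m + c, h⟩ : ℕ)) = a * (k + m) + k + c) :
    ∃ L : List (Equiv.Perm (Fin (n * (k + m)))),
      L.length = k * m * (n * (n - 1) / 2) ∧
      (∀ ρ ∈ L, ∃ i j : Fin (n * (k + m)), (j : ℕ) = (i : ℕ) + 1 ∧ ρ = Equiv.swap i j) ∧
      L.prod = τ :=
  stmt_8_general n k m τ hτA hτB
end
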